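/- arXiv:1703.03179 — 8 statements merged into one kernel-verified Lean document; each statement's English description precedes it below -/
import Mathlib

section
/- For constants 0 < β < 1 and r > 0, the function f₀(t) = α − (1 − t)·log₂(β·2^{r/(1−t)} + 1 − β) is non-increasing on [0, 1), for any real constant α. -/
/-!
Write `φ x = log₂ (β 2^x + 1 - β)` and `s = 1 - t`, so that `f₀ t = α - s φ (r / s)`.
Concavity of `y ↦ y ^ l` for `l ∈ [0, 1]`, applied at the points `2^x` and `1` with weights
`β, 1 - β`, gives `φ (l x) ≤ l φ x`. For `s₁ ≤ s₂` and `l = s₁ / s₂` this reads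
`s₂ φ (r / s₂) ≤ s₁ φ (r / s₁)`, so `s ↦ s φ (r / s)` is antitone and `f₀` is antitone in `t`.
-/

open Real Set

lemma mul_rpow_add_one_sub_le_rpow {β x l : ℝ} (hβ0 : 0 ≤ β) (hβ1 : β ≤ 1) (hx : 0 ≤ x)
    (hl0 : 0 ≤ l) (hl1 : l ≤ 1) :
    β * x ^ l + (1 - β) ≤ (β * x + (1 - β)) ^ l := by
  have h := (concaveOn_rpow hl0 hl1).2 (mem_Ici.2 hx) (mem_Ici.2 zero_le_one) hβ0
    (sub_nonneg.2 hβ1) (by ring)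
  simpa only [smul_eq_mul, mul_one, one_rpow] using h

lemma logb_mul_two_rpow_add_one_sub_le {β : ℝ} (hβ0 : 0 ≤ β) (hβ1 : β ≤ 1) (x : ℝ)
    {l : ℝ} (hl0 : 0 ≤ l) (hl1 : l ≤ 1) :
    logb 2 (β * 2 ^ (l * x) + 1 - β) ≤ l * logb 2 (β * 2 ^ x + 1 - β) := by
  have hpos : ∀ y : ℝ, 0 < β * 2 ^ y + 1 - β := fun y => by
    have : (0 : ℝ) < 2 ^ y := by positivity
    rcases hβ1.eq_or_lt with rfl | hβ1
    · simpa using this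
    · nlinarith
  have key : β * 2 ^ (l * x) + 1 - β ≤ (β * 2 ^ x + 1 - β) ^ l := by
    rw [mul_comm l, rpow_mul zero_le_two, add_sub_assoc, add_sub_assoc]
    exact mul_rpow_add_one_sub_le_rpow hβ0 hβ1 (by positivity) hl0 hl1
  calc logb 2 (β * 2 ^ (l * x) + 1 - β)
      ≤ logb 2 ((β * 2 ^ x + 1 - β) ^ l) := logb_le_logb_of_le one_lt_two (hpos _) key
    _ = l * logb 2 (β * 2 ^ x + 1 - β) := logb_rpow_eq_mul_logb_of_pos (hpos x)

lemma antitoneOn_mul_comp_div {φ : ℝ → ℝ}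
    (hφ : ∀ x, ∀ l ∈ Icc (0 : ℝ) 1, φ (l * x) ≤ l * φ x) (r : ℝ) :
    AntitoneOn (fun s => s * φ (r / s)) (Ioi 0) := by
  intro s₁ (hs₁ : 0 < s₁) s₂ (hs₂ : 0 < s₂) h12
  have hl : s₁ / s₂ ∈ Icc (0 : ℝ) 1 := ⟨by positivity, (div_le_one hs₂).2 h12⟩
  calc s₂ * φ (r / s₂) = s₂ * φ (s₁ / s₂ * (r / s₁)) := by field_simp
    _ ≤ s₂ * (s₁ / s₂ * φ (r / s₁)) := mul_le_mul_of_nonneg_left (hφ _ _ hl) hs₂.le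
    _ = s₁ * φ (r / s₁) := by field_simp

theorem stmt_1_general (r β α : ℝ) (hβ0 : 0 < β) (hβ1 : β < 1)
    (f₀ : ℝ → ℝ)
    (hf : ∀ t : ℝ, f₀ t =
      α - (1 - t) * Real.logb 2 (β * (2:ℝ) ^ (r / (1 - t)) + 1 - β)) :
    AntitoneOn f₀ (Set.Ico (0:ℝ) 1) := by
  have hg := antitoneOn_mul_comp_div (φ := fun x => logb 2 (β * 2 ^ x + 1 - β))
    (fun x _ hl => logb_mul_two_rpow_add_one_sub_le hβ0.le hβ1.le x hl.1 hl.2) r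
  intro t₁ ht₁ t₂ ht₂ h12
  rw [hf, hf]
  exact sub_le_sub_left (hg (sub_pos.2 ht₂.2) (sub_pos.2 ht₁.2) (sub_le_sub_left h12 1)) α

theorem stmt_1 (r β α : ℝ) (hr : 0 < r) (hβ0 : 0 < β) (hβ1 : β < 1)
    (f₀ : ℝ → ℝ)
    (hf : ∀ t : ℝ, f₀ t =
      α - (1 - t) * Real.logb 2 (β * (2:ℝ) ^ (r / (1 - t)) + 1 - β)) :
    AntitoneOn f₀ (Set.Ico (0:ℝ) 1) :=
  stmt_1_general r β α hβ0 hβ1 f₀ hf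
end

section
/- For constants 0 < β < 1 and r > 0, the second derivative of f₀(t) = α − (1 − t)·log₂(β·2^{r/(1−t)} + 1 − β) satisfies f₀''(t) = −(β(1−β)r²·2^{r/(1−t)}·ln 2)/((1−t)³·(β·2^{r/(1−t)} + 1 − β)²) ≤ 0 for all t ∈ [0,1); hence f₀ is concave on [0,1). -/
/-!
Write `f₀ t = α - (1 - t) φ (r / (1 - t))` with `φ u = log₂ (β 2ᵘ + 1 - β)`. The subtracted term
is the perspective of `φ`, whose second derivative is `r² / (1 - t)³ · φ'' (r / (1 - t))`, and
`φ'' u = β (1 - β) 2ᵘ log 2 / (β 2ᵘ + 1 - β)²` is nonnegative (`φ` is a log-sum-exp). Hence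
`f₀'' ≤ 0` on `t < 1`, and concavity follows from the second-derivative test.
-/

open Real Set Filter Topology

theorem deriv_deriv_eq_of_hasDerivAt {f f' : ℝ → ℝ} {f'' t : ℝ}
    (hf : ∀ᶠ s in 𝓝 t, HasDerivAt f (f' s) s) (hf' : HasDerivAt f' f'' t) :
    deriv (deriv f) t = f'' := by
  rw [EventuallyEq.deriv_eq (hf.mono fun s hs => hs.deriv)]
  exact hf'.deriv

theorem concaveOn_of_hasDerivAt2_nonpos {D : Set ℝ} (hD : Convex ℝ D) (hDo : IsOpen D)
    {f f' f'' : ℝ → ℝ} (hf : ∀ x ∈ D, HasDerivAt f (f' x) x)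
    (hf' : ∀ x ∈ D, HasDerivAt f' (f'' x) x) (hf'' : ∀ x ∈ D, f'' x ≤ 0) :
    ConcaveOn ℝ D f := by
  refine concaveOn_of_hasDerivWithinAt2_nonpos (f' := f') (f'' := f'') hD
    (fun x hx => (hf x hx).continuousAt.continuousWithinAt) ?_ ?_ ?_ <;>
    rw [hDo.interior_eq]
  · exact fun x hx => (hf x hx).hasDerivWithinAt
  · exact fun x hx => (hf' x hx).hasDerivWithinAt
  · exact hf''

theorem hasDerivAt_div_one_sub (r : ℝ) {t : ℝ} (ht : t ≠ 1) :
    HasDerivAt (fun s => r / (1 - s)) (r / (1 - t) ^ 2) t := by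
  have h : (1 : ℝ) - t ≠ 0 := sub_ne_zero.mpr ht.symm
  refine ((((hasDerivAt_id t).const_sub 1).inv h).const_mul r).congr_deriv ?_
  simp only [id, neg_neg]
  field_simp

section Perspective

variable {φ : ℝ → ℝ} {r t : ℝ}

theorem hasDerivAt_perspective {φ' : ℝ} (ht : t ≠ 1) (hφ : HasDerivAt φ φ' (r / (1 - t))) :
    HasDerivAt (fun s => (1 - s) * φ (r / (1 - s))) (r / (1 - t) * φ' - φ (r / (1 - t))) t := by
  have h : (1 : ℝ) - t ≠ 0 := sub_ne_zero.mpr ht.symm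
  have hu := hasDerivAt_div_one_sub r ht
  refine (((hasDerivAt_id t).const_sub 1).mul (hφ.comp t hu)).congr_deriv ?_
  simp only [id, Function.comp]
  field_simp
  ring

theorem hasDerivAt_perspective_deriv {φ' : ℝ → ℝ} {φ'' : ℝ} (ht : t ≠ 1)
    (hφ : HasDerivAt φ (φ' (r / (1 - t))) (r / (1 - t))) (hφ' : HasDerivAt φ' φ'' (r / (1 - t))) :
    HasDerivAt (fun s => r / (1 - s) * φ' (r / (1 - s)) - φ (r / (1 - s)))
      (r ^ 2 / (1 - t) ^ 3 * φ'') t := by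
  have h : (1 : ℝ) - t ≠ 0 := sub_ne_zero.mpr ht.symm
  have hu := hasDerivAt_div_one_sub r ht
  refine ((hu.mul (hφ'.comp t hu)).sub (hφ.comp t hu)).congr_deriv ?_
  simp only [Function.comp]
  field_simp
  ring

end Perspective

section LogMixture

variable {b β : ℝ}

theorem mixture_pos (hb : 0 < b) (hβ0 : 0 ≤ β) (hβ1 : β ≤ 1) (u : ℝ) :
    0 < β * b ^ u + 1 - β := by
  have := rpow_pos_of_pos hb u
  rcases hβ1.lt_or_eq with h | rfl
  · nlinarith
  · simpa

theorem hasDerivAt_logb_mixture (hb : 0 < b) (hb1 : b ≠ 1) (hβ0 : 0 ≤ β) (hβ1 : β ≤ 1)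
    (u : ℝ) :
    HasDerivAt (fun v => logb b (β * b ^ v + 1 - β)) (β * b ^ u / (β * b ^ u + 1 - β)) u := by
  have hlog : log b ≠ 0 := log_ne_zero_of_pos_of_ne_one hb hb1
  have hg := ((((hasStrictDerivAt_const_rpow hb u).hasDerivAt.const_mul β).add_const 1).sub_const
    β).log (mixture_pos hb hβ0 hβ1 u).ne'
  refine (hg.div_const (log b)).congr_deriv ?_
  field_simp

theorem hasDerivAt_mixture_weight (hb : 0 < b) (hβ0 : 0 ≤ β) (hβ1 : β ≤ 1) (u : ℝ) :
    HasDerivAt (fun v => β * b ^ v / (β * b ^ v + 1 - β))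
      (β * (1 - β) * b ^ u * log b / (β * b ^ u + 1 - β) ^ 2) u := by
  have hE := (hasStrictDerivAt_const_rpow hb u).hasDerivAt.const_mul β
  refine (hE.div ((hE.add_const 1).sub_const β) (mixture_pos hb hβ0 hβ1 u).ne').congr_deriv ?_
  ring

end LogMixture

theorem stmt_2_general (r β α : ℝ) (hβ0 : 0 < β) (hβ1 : β < 1)
    (f₀ : ℝ → ℝ)
    (hf : ∀ t : ℝ, f₀ t =
      α - (1 - t) * Real.logb 2 (β * (2:ℝ) ^ (r / (1 - t)) + 1 - β)) :
    (∀ t ∈ Set.Ico (0:ℝ) 1,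
      deriv (deriv f₀) t =
        -(β * (1 - β) * r ^ 2 * (2:ℝ) ^ (r / (1 - t)) * Real.log 2) /
          ((1 - t) ^ 3 * (β * (2:ℝ) ^ (r / (1 - t)) + 1 - β) ^ 2) ∧
      deriv (deriv f₀) t ≤ 0) ∧
    ConcaveOn ℝ (Set.Ico (0:ℝ) 1) f₀ := by
  set φ' : ℝ → ℝ := fun u => β * (2:ℝ) ^ u / (β * (2:ℝ) ^ u + 1 - β)
  set f₀' : ℝ → ℝ := fun t =>
    -(r / (1 - t) * φ' (r / (1 - t)) - logb 2 (β * (2:ℝ) ^ (r / (1 - t)) + 1 - β))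
  set f₀'' : ℝ → ℝ := fun t =>
    -(β * (1 - β) * r ^ 2 * (2:ℝ) ^ (r / (1 - t)) * Real.log 2) /
      ((1 - t) ^ 3 * (β * (2:ℝ) ^ (r / (1 - t)) + 1 - β) ^ 2)
  have hφ u := hasDerivAt_logb_mixture two_pos (by norm_num) hβ0.le hβ1.le u
  have hf₀ : ∀ t < 1, HasDerivAt f₀ (f₀' t) t := fun t ht => by
    rw [show f₀ = _ from funext hf]
    exact (hasDerivAt_perspective ht.ne (hφ _)).const_sub α
  have hf₀' : ∀ t < 1, HasDerivAt f₀' (f₀'' t) t := fun t ht => by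
    have : 1 - t ≠ 0 := sub_ne_zero.mpr ht.ne'
    refine (hasDerivAt_perspective_deriv ht.ne (hφ _)
      (hasDerivAt_mixture_weight two_pos hβ0.le hβ1.le _)).neg.congr_deriv ?_
    have := (mixture_pos two_pos hβ0.le hβ1.le (r / (1 - t))).ne'
    simp only [f₀'']
    field_simp
  have hf₀''_nonpos : ∀ t < 1, f₀'' t ≤ 0 := fun t ht => by
    have : 0 < 1 - t := by linarith
    have : 0 < 1 - β := by linarith
    have := rpow_pos_of_pos two_pos (r / (1 - t))
    simp only [f₀'', neg_div, neg_nonpos]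
    positivity
  have hdd : ∀ t < 1, deriv (deriv f₀) t = f₀'' t := fun t ht =>
    deriv_deriv_eq_of_hasDerivAt ((eventually_lt_nhds ht).mono hf₀) (hf₀' t ht)
  refine ⟨fun t ht => ⟨hdd t ht.2, (hdd t ht.2).trans_le (hf₀''_nonpos t ht.2)⟩, ?_⟩
  exact (concaveOn_of_hasDerivAt2_nonpos (convex_Iio 1) isOpen_Iio hf₀ hf₀' hf₀''_nonpos).subset
    Ico_subset_Iio_self (convex_Ico 0 1)

theorem stmt_2 (r β α : ℝ) (hr : 0 < r) (hβ0 : 0 < β) (hβ1 : β < 1)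
    (f₀ : ℝ → ℝ)
    (hf : ∀ t : ℝ, f₀ t =
      α - (1 - t) * Real.logb 2 (β * (2:ℝ) ^ (r / (1 - t)) + 1 - β)) :
    (∀ t ∈ Set.Ico (0:ℝ) 1,
      deriv (deriv f₀) t =
        -(β * (1 - β) * r ^ 2 * (2:ℝ) ^ (r / (1 - t)) * Real.log 2) /
          ((1 - t) ^ 3 * (β * (2:ℝ) ^ (r / (1 - t)) + 1 - β) ^ 2) ∧
      deriv (deriv f₀) t ≤ 0) ∧
    ConcaveOn ℝ (Set.Ico (0:ℝ) 1) f₀ :=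
  stmt_2_general r β α hβ0 hβ1 f₀ hf
end

section
/- For constants r > 0, ζ > 0, K > 0: if 0 < ζ < 1 then the function g₀(x) = (K/(x − ζ))·(2^{rx} − 1) + 1 is convex on the interval [1, 1 + ζ); if ζ ≥ 1 then g₀ is convex on (ζ, 1 + ζ). -/
/-!
Write `2 ^ (r x) = exp (a x)` with `a = r log 2 > 0`. On `x > ζ`, with `t = x - ζ`, the second
derivative of `(exp (a x) - 1) / t` is `(exp (a x) (a²t² - 2at + 2) - 2) / t³`, and its numerator is
nonnegative because `exp (a x) ≥ exp (a t)` and `exp u (u² - 2u + 2) ≥ 2` for `u ≥ 0`. So `g₀` is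
convex on `(ζ, ∞)`, which contains both intervals of the statement.
-/

open Real Set

lemma two_le_exp_mul_sq_sub_two_mul_add_two {u : ℝ} (hu : 0 ≤ u) :
    2 ≤ exp u * (u ^ 2 - 2 * u + 2) := by
  have hexp : 1 + u + u ^ 2 / 2 ≤ exp u := quadratic_le_exp_of_nonneg hu
  have hq : 0 ≤ u ^ 2 - 2 * u + 2 := by nlinarith [sq_nonneg (u - 1)]
  -- `(1 + u + u² / 2) (u² - 2u + 2) = 2 + u⁴ / 2`
  nlinarith [mul_le_mul_of_nonneg_right hexp hq, pow_two_nonneg (u ^ 2)]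

section

variable {a ζ x : ℝ}

lemma hasDerivAt_exp_sub_one_div_sub (hx : x ≠ ζ) :
    HasDerivAt (fun x => (exp (a * x) - 1) / (x - ζ))
      ((a * exp (a * x) * (x - ζ) - (exp (a * x) - 1)) / (x - ζ) ^ 2) x := by
  have hexp : HasDerivAt (fun x => exp (a * x) - 1) (a * exp (a * x)) x := by
    simpa [mul_comm] using ((hasDerivAt_id x).const_mul a).exp.sub_const 1
  simpa using hexp.fun_div ((hasDerivAt_id x).sub_const ζ) (sub_ne_zero.mpr hx)

lemma hasDerivAt_deriv_exp_sub_one_div_sub (hx : x ≠ ζ) :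
    HasDerivAt (fun x => (a * exp (a * x) * (x - ζ) - (exp (a * x) - 1)) / (x - ζ) ^ 2)
      ((exp (a * x) * ((a * (x - ζ)) ^ 2 - 2 * (a * (x - ζ)) + 2) - 2) / (x - ζ) ^ 3) x := by
  have hexp : HasDerivAt (fun x => exp (a * x)) (a * exp (a * x)) x := by
    simpa [mul_comm] using ((hasDerivAt_id x).const_mul a).exp
  have hsub : HasDerivAt (fun x => x - ζ) 1 x := (hasDerivAt_id x).sub_const ζ
  have hnum := ((hexp.const_mul a).fun_mul hsub).fun_sub (hexp.sub_const 1)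
  have hden : (x - ζ) ^ 2 ≠ 0 := pow_ne_zero 2 (sub_ne_zero.mpr hx)
  refine (hnum.fun_div (hsub.fun_pow 2) hden).congr_deriv ?_
  field_simp
  ring

lemma convexOn_exp_sub_one_div_sub (ha : 0 ≤ a) (hζ : 0 ≤ ζ) :
    ConvexOn ℝ (Ioi ζ) fun x => (exp (a * x) - 1) / (x - ζ) := by
  have hne {x : ℝ} (hx : x ∈ interior (Ioi ζ)) : x ≠ ζ := ne_of_gt (interior_subset hx)
  refine convexOn_of_hasDerivWithinAt2_nonneg (convex_Ioi ζ)
    (fun x hx => (hasDerivAt_exp_sub_one_div_sub (ne_of_gt hx)).continuousAt.continuousWithinAt)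
    (fun x hx => (hasDerivAt_exp_sub_one_div_sub (hne hx)).hasDerivWithinAt)
    (fun x hx => (hasDerivAt_deriv_exp_sub_one_div_sub (hne hx)).hasDerivWithinAt) ?_
  intro x hx
  rw [interior_Ioi] at hx
  have ht : 0 < x - ζ := sub_pos.mpr hx
  have hq : 0 ≤ (a * (x - ζ)) ^ 2 - 2 * (a * (x - ζ)) + 2 := by
    nlinarith [sq_nonneg (a * (x - ζ) - 1)]
  have hmono : exp (a * (x - ζ)) ≤ exp (a * x) := exp_le_exp.mpr (by nlinarith)
  have hkey := two_le_exp_mul_sq_sub_two_mul_add_two (mul_nonneg ha ht.le)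
  have hnum : 0 ≤ exp (a * x) * ((a * (x - ζ)) ^ 2 - 2 * (a * (x - ζ)) + 2) - 2 := by
    nlinarith [mul_le_mul_of_nonneg_right hmono hq]
  positivity

end

theorem stmt_3 (r ζ K : ℝ) (hr : 0 < r) (hζ : 0 < ζ) (hK : 0 < K)
    (g₀ : ℝ → ℝ)
    (hg : ∀ x : ℝ, g₀ x = K / (x - ζ) * ((2:ℝ) ^ (r * x) - 1) + 1) :
    (ζ < 1 → ConvexOn ℝ (Set.Ico (1:ℝ) (1 + ζ)) g₀) ∧
    (1 ≤ ζ → ConvexOn ℝ (Set.Ioo ζ (1 + ζ)) g₀) := by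
  have hg₀ : g₀ = fun x => K • ((exp (r * log 2 * x) - 1) / (x - ζ)) + 1 := by
    ext x
    rw [hg, rpow_def_of_pos two_pos, smul_eq_mul]
    ring_nf
  have hconv : ConvexOn ℝ (Ioi ζ) g₀ := by
    rw [hg₀]
    have ha : 0 ≤ r * log 2 := mul_nonneg hr.le (log_pos one_lt_two).le
    exact ((convexOn_exp_sub_one_div_sub ha hζ.le).smul hK.le).add_const 1
  exact ⟨fun h => hconv.subset (fun x hx => h.trans_le hx.1) (convex_Ico _ _),
    fun _ => hconv.subset Ioo_subset_Ioi_self (convex_Ioo _ _)⟩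
end

section
/- For r > 0 and ζ > 0, the function g₅(x) = (2^{rx} − 1)² − (x − ζ)²·2^{rx}·(r·ln 2)² is strictly increasing on (ζ, ∞), and g₅(x) > g₅(ζ) = (2^{rζ} − 1)² > 0 for all x > ζ. -/
open Real Set

/-! Write `2^{rx} = exp (c x)` with `c = r log 2 > 0`. The derivative of `g₅` is
`c exp (c x) g₆(x)`, and with `t = c (x - ζ) > 0` the factor `g₆(x) = 2 (exp (c x) - 1) - 2 t - t²`
is positive because `exp (c x) ≥ exp t > 1 + t + t² / 2` when `ζ ≥ 0`. Hence `g₅` is strictly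
increasing on `[ζ, ∞)`, and `g₅ ζ = (2^{rζ} - 1)² > 0` since `rζ > 0`. -/

lemma quadratic_lt_exp_of_pos {t : ℝ} (ht : 0 < t) : 1 + t + t ^ 2 / 2 < exp t := by
  have h := sum_le_exp_of_nonneg ht.le 4
  norm_num [Finset.sum_range_succ, Nat.factorial] at h
  nlinarith [pow_pos ht 3]

lemma two_rpow_mul_eq_exp (r x : ℝ) : (2 : ℝ) ^ (r * x) = exp (r * log 2 * x) := by
  rw [rpow_def_of_pos two_pos]
  ring_nf

/-- The paper's `g₅`, with `2^{rx}` written as `exp (c x)` for `c = r log 2`. -/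
noncomputable def g5Exp (c ζ x : ℝ) : ℝ :=
  (exp (c * x) - 1) ^ 2 - (x - ζ) ^ 2 * exp (c * x) * c ^ 2

/-- The paper's `g₆`, in the same variables. -/
noncomputable def g6Exp (c ζ x : ℝ) : ℝ :=
  2 * (exp (c * x) - 1) - 2 * (c * (x - ζ)) - (c * (x - ζ)) ^ 2

section

variable {c ζ : ℝ}

lemma hasDerivAt_g5Exp (x : ℝ) :
    HasDerivAt (g5Exp c ζ) (c * exp (c * x) * g6Exp c ζ x) x := by
  have hexp : HasDerivAt (fun x => exp (c * x)) (exp (c * x) * c) x :=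
    ((hasDerivAt_id x).const_mul c).exp.congr_deriv (by simp)
  have h := ((hexp.sub_const 1).fun_pow 2).fun_sub
    (((((hasDerivAt_id' x).sub_const ζ).fun_pow 2).fun_mul hexp).mul_const (c ^ 2))
  refine h.congr_deriv ?_
  simp only [g6Exp]
  ring

lemma g6Exp_pos (hc : 0 < c) (hζ : 0 ≤ ζ) {x : ℝ} (hx : ζ < x) : 0 < g6Exp c ζ x := by
  have ht : 0 < c * (x - ζ) := mul_pos hc (sub_pos.mpr hx)
  have hle : exp (c * (x - ζ)) ≤ exp (c * x) :=
    exp_le_exp.mpr (by nlinarith)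
  have hquad := quadratic_lt_exp_of_pos ht
  unfold g6Exp
  linarith

lemma strictMonoOn_g5Exp (hc : 0 < c) (hζ : 0 ≤ ζ) : StrictMonoOn (g5Exp c ζ) (Ici ζ) := by
  refine strictMonoOn_of_deriv_pos (convex_Ici ζ)
    (fun x _ => (hasDerivAt_g5Exp x).continuousAt.continuousWithinAt) fun x hx => ?_
  rw [interior_Ici] at hx
  rw [(hasDerivAt_g5Exp x).deriv]
  exact mul_pos (mul_pos hc (exp_pos _)) (g6Exp_pos hc hζ hx)

end

theorem stmt_8 (r ζ : ℝ) (hr : 0 < r) (hζ : 0 < ζ)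
    (g₅ : ℝ → ℝ)
    (hg : ∀ x : ℝ, g₅ x =
      ((2:ℝ) ^ (r * x) - 1) ^ 2 - (x - ζ) ^ 2 * (2:ℝ) ^ (r * x) * (r * Real.log 2) ^ 2) :
    StrictMonoOn g₅ (Set.Ioi ζ) ∧
    g₅ ζ = ((2:ℝ) ^ (r * ζ) - 1) ^ 2 ∧
    0 < g₅ ζ ∧
    ∀ x : ℝ, ζ < x → g₅ ζ < g₅ x := by
  have hg₅ : g₅ = g5Exp (r * log 2) ζ := by
    ext x
    rw [hg, two_rpow_mul_eq_exp]
    rfl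
  have hmono := strictMonoOn_g5Exp (mul_pos hr (log_pos one_lt_two)) hζ.le
  rw [← hg₅] at hmono
  have hval : g₅ ζ = ((2 : ℝ) ^ (r * ζ) - 1) ^ 2 := by simp [hg]
  refine ⟨hmono.mono Ioi_subset_Ici_self, hval, ?_, fun x hx => hmono self_mem_Ici hx.le hx⟩
  rw [hval]
  have h2pow := one_lt_rpow one_lt_two (mul_pos hr hζ)
  positivity
end

section
/- Consider maximizing f₀(t) = α − (1 − t)·log₂(β·2^{r/(1−t)} + 1 − β) over t ∈ [t_min, t_max] where t_min = P_SIC/(ξ|h₁|²P_max + P_SIC) and t_max = 1 − r/log₂(1 + |h₁|²P_max/σ²), with α = log₂(1 + |h₂|²P_max/σ²) and β = |h₂|²/|h₁|². If the interval [t_min, t_max] is nonempty (0 < β < 1, r > 0), then the maximum is attained at t = t_min and equals α − (ξ|h₁|²P_max/(ξ|h₁|²P_max + P_SIC))·log₂(β·(2^{r(ξ|h₁|²P_max + P_SIC)/(ξ|h₁|²P_max)} − 1) + 1). -/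
open Real Set

/-!
Writing `s = 1 - t`, the claim is that `s ↦ s * logb 2 (β * 2 ^ (r / s) + 1 - β)` is antitone
for `s > 0`. With `a = r / s` this is the monotonicity of `a ↦ log (β * 2 ^ a + 1 - β) / a`,
which follows from Jensen's inequality for `x ↦ x ^ p`, `p = b / a ≥ 1`:
`(β * 2 ^ a + 1 - β) ^ (b / a) ≤ β * 2 ^ b + 1 - β`.
-/

lemma rpow_mul_add_one_sub_le {β x p : ℝ} (hβ₀ : 0 ≤ β) (hβ₁ : β ≤ 1) (hx : 0 ≤ x)
    (hp : 1 ≤ p) : (β * x + (1 - β)) ^ p ≤ β * x ^ p + (1 - β) := by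
  simpa using (convexOn_rpow hp).2 (mem_Ici.2 hx) (mem_Ici.2 zero_le_one) hβ₀
    (sub_nonneg.2 hβ₁) (by ring)

lemma mul_log_mul_rpow_add_one_sub_le {β c a b : ℝ} (hβ₀ : 0 ≤ β) (hβ₁ : β ≤ 1) (hc : 0 < c)
    (ha : 0 < a) (hab : a ≤ b) :
    b * log (β * c ^ a + (1 - β)) ≤ a * log (β * c ^ b + (1 - β)) := by
  have hpos : 0 < β * c ^ a + (1 - β) := by
    rcases hβ₀.eq_or_lt with rfl | hβ
    · norm_num
    · nlinarith [rpow_pos_of_pos hc a]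
  have hjensen : (β * c ^ a + (1 - β)) ^ (b / a) ≤ β * c ^ b + (1 - β) := by
    calc (β * c ^ a + (1 - β)) ^ (b / a) ≤ β * (c ^ a) ^ (b / a) + (1 - β) :=
          rpow_mul_add_one_sub_le hβ₀ hβ₁ (rpow_nonneg hc.le a) ((one_le_div ha).2 hab)
      _ = β * c ^ b + (1 - β) := by
          rw [← rpow_mul hc.le, mul_div_cancel₀ b ha.ne']
  calc b * log (β * c ^ a + (1 - β)) = a * log ((β * c ^ a + (1 - β)) ^ (b / a)) := by
        rw [log_rpow hpos]; field_simp
    _ ≤ a * log (β * c ^ b + (1 - β)) :=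
        mul_le_mul_of_nonneg_left (log_le_log (rpow_pos_of_pos hpos _) hjensen) ha.le

lemma antitoneOn_mul_logb_mul_rpow_div {β b c r : ℝ} (hβ₀ : 0 ≤ β) (hβ₁ : β ≤ 1) (hb : 1 ≤ b)
    (hc : 0 < c) (hr : 0 < r) :
    AntitoneOn (fun s => s * logb b (β * c ^ (r / s) + 1 - β)) (Ioi 0) := by
  intro s (hs : 0 < s) s₁ (hs₁ : 0 < s₁) hss₁
  have key := mul_log_mul_rpow_add_one_sub_le hβ₀ hβ₁ hc (div_pos hr hs₁)
    (div_le_div_of_nonneg_left hr.le hs hss₁)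
  have hlog : s₁ * log (β * c ^ (r / s₁) + (1 - β)) ≤ s * log (β * c ^ (r / s) + (1 - β)) :=
    calc s₁ * log (β * c ^ (r / s₁) + (1 - β))
        = s * s₁ / r * (r / s * log (β * c ^ (r / s₁) + (1 - β))) := by field_simp
      _ ≤ s * s₁ / r * (r / s₁ * log (β * c ^ (r / s) + (1 - β))) :=
          mul_le_mul_of_nonneg_left key (by positivity)
      _ = s * log (β * c ^ (r / s) + (1 - β)) := by field_simp
  simp only [logb, add_sub_assoc, ← mul_div_assoc]
  exact div_le_div_of_nonneg_right hlog (log_nonneg hb)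

theorem stmt_12_general (h1 h2 Pmax σ2 ξ PSIC r : ℝ)
    (hh1 : 0 < h1) (hh2 : 0 < h2) (hP : 0 < Pmax) (hσ : 0 < σ2) (hξ : 0 < ξ)
    (hS : 0 < PSIC) (h12 : h2 < h1) (hr : 0 < r)
    (α β tmin tmax : ℝ)
    (hβ : β = h2 / h1)
    (htmin : tmin = PSIC / (ξ * h1 * Pmax + PSIC))
    (htmax : tmax = 1 - r / Real.logb 2 (1 + h1 * Pmax / σ2))
    (f₀ : ℝ → ℝ)
    (hf : ∀ t : ℝ, f₀ t =
      α - (1 - t) * Real.logb 2 (β * (2:ℝ) ^ (r / (1 - t)) + 1 - β)) :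
    IsMaxOn f₀ (Set.Icc tmin tmax) tmin ∧
    f₀ tmin =
      α - ξ * h1 * Pmax / (ξ * h1 * Pmax + PSIC) *
        Real.logb 2
          (β * ((2:ℝ) ^ (r * (ξ * h1 * Pmax + PSIC) / (ξ * h1 * Pmax)) - 1) + 1) := by
  have hβ₀ : 0 ≤ β := hβ ▸ div_nonneg hh2.le hh1.le
  have hβ₁ : β ≤ 1 := hβ ▸ (div_le_one hh1).2 h12.le
  have htmax : tmax < 1 := by
    have : 0 < logb 2 (1 + h1 * Pmax / σ2) := logb_pos one_lt_two (by simp; positivity)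
    rw [htmax]; linarith [div_pos hr this]
  have hg := antitoneOn_mul_logb_mul_rpow_div hβ₀ hβ₁ one_le_two two_pos hr
  refine ⟨fun t ⟨htmin_le, ht_le⟩ => ?_, ?_⟩
  · have hs : 1 - t ≤ 1 - tmin := by linarith
    have := hg (show 0 < 1 - t by simp; linarith) (show 0 < 1 - tmin by simp; linarith) hs
    simp only [mem_ofPred_eq, hf]
    linarith
  · have h1tmin : 1 - tmin = ξ * h1 * Pmax / (ξ * h1 * Pmax + PSIC) := by
      rw [htmin]; field_simp; ring
    rw [hf, h1tmin, div_div_eq_mul_div]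
    ring_nf

theorem stmt_12 (h1 h2 Pmax σ2 ξ PSIC r : ℝ)
    (hh1 : 0 < h1) (hh2 : 0 < h2) (hP : 0 < Pmax) (hσ : 0 < σ2) (hξ : 0 < ξ)
    (hS : 0 < PSIC) (h12 : h2 < h1) (hr : 0 < r)
    (α β tmin tmax : ℝ)
    (hα : α = Real.logb 2 (1 + h2 * Pmax / σ2))
    (hβ : β = h2 / h1)
    (htmin : tmin = PSIC / (ξ * h1 * Pmax + PSIC))
    (htmax : tmax = 1 - r / Real.logb 2 (1 + h1 * Pmax / σ2))
    (f₀ : ℝ → ℝ)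
    (hf : ∀ t : ℝ, f₀ t =
      α - (1 - t) * Real.logb 2 (β * (2:ℝ) ^ (r / (1 - t)) + 1 - β))
    (hne : tmin ≤ tmax) :
    IsMaxOn f₀ (Set.Icc tmin tmax) tmin ∧
    f₀ tmin =
      α - ξ * h1 * Pmax / (ξ * h1 * Pmax + PSIC) *
        Real.logb 2
          (β * ((2:ℝ) ^ (r * (ξ * h1 * Pmax + PSIC) / (ξ * h1 * Pmax)) - 1) + 1) :=
  stmt_12_general h1 h2 Pmax σ2 ξ PSIC r hh1 hh2 hP hσ hξ hS h12 hr α β tmin tmax hβ htmin htmax f₀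
    hf
end

section
/- With the notation of the time-switching optimum, the optimal rate R₂* = α − (1 − t_min)·log₂(β·2^{r/(1−t_min)} + 1 − β) with t_min = P_SIC/(ξ|h₁|²P_max + P_SIC), α = log₂(1 + |h₂|²P_max/σ²), 0 < β = |h₂|²/|h₁|² < 1, satisfies t_min·α ≤ R₂* ≤ α for every r in the feasible range 0 ≤ r ≤ (1 − t_min)·log₂(1 + |h₁|²P_max/σ²). -/
open Real Set

/-- Since `β * 2 ^ s + 1 - β = 1 + β * (2 ^ s - 1)`, the bounds `1 ≤ 2 ^ s ≤ 1 + c` pass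
through the mixture. -/
lemma logb_mix_two_rpow_mem_Icc {β c s : ℝ} (hβ : 0 ≤ β) (hc : 0 < 1 + c) (hs₀ : 0 ≤ s)
    (hs : s ≤ logb 2 (1 + c)) :
    logb 2 (β * 2 ^ s + 1 - β) ∈ Icc 0 (logb 2 (1 + β * c)) := by
  have h_one_le : (1 : ℝ) ≤ 2 ^ s := one_le_rpow one_le_two hs₀
  have h_le : (2 : ℝ) ^ s ≤ 1 + c := (le_logb_iff_rpow_le one_lt_two hc).1 hs
  have h_mix_one_le : 1 ≤ β * 2 ^ s + 1 - β := by nlinarith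
  refine ⟨logb_nonneg one_lt_two h_mix_one_le, logb_le_logb_of_le one_lt_two (by linarith) ?_⟩
  nlinarith

theorem stmt_13_general (h1 h2 Pmax σ2 ξ PSIC r : ℝ)
    (hh1 : 0 < h1) (hh2 : 0 < h2) (hP : 0 < Pmax) (hσ : 0 < σ2) (hξ : 0 < ξ)
    (hS : 0 < PSIC)
    (α β tmin : ℝ)
    (hα : α = Real.logb 2 (1 + h2 * Pmax / σ2))
    (hβ : β = h2 / h1)
    (htmin : tmin = PSIC / (ξ * h1 * Pmax + PSIC))
    (hr0 : 0 ≤ r)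
    (hr1 : r ≤ (1 - tmin) * Real.logb 2 (1 + h1 * Pmax / σ2))
    (R₂ : ℝ)
    (hR : R₂ = α - (1 - tmin) * Real.logb 2 (β * (2:ℝ) ^ (r / (1 - tmin)) + 1 - β)) :
    tmin * α ≤ R₂ ∧ R₂ ≤ α := by
  have ht : 0 < 1 - tmin := by
    rw [htmin, sub_pos, div_lt_one (by positivity)]
    linarith [show 0 < ξ * h1 * Pmax by positivity]
  have hs : r / (1 - tmin) ≤ logb 2 (1 + h1 * Pmax / σ2) := by
    rwa [div_le_iff₀ ht, mul_comm]
  have hβc : β * (h1 * Pmax / σ2) = h2 * Pmax / σ2 := by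
    rw [hβ]; field_simp
  have hβ₀ : 0 ≤ β := by rw [hβ]; positivity
  obtain ⟨hL₀, hLα⟩ :=
    logb_mix_two_rpow_mem_Icc hβ₀ (by positivity) (div_nonneg hr0 ht.le) hs
  rw [hβc, ← hα] at hLα
  subst hR
  -- `R₂ - tmin * α = (1 - tmin) * (α - L)` and `α - R₂ = (1 - tmin) * L`
  constructor <;> nlinarith

theorem stmt_13 (h1 h2 Pmax σ2 ξ PSIC r : ℝ)
    (hh1 : 0 < h1) (hh2 : 0 < h2) (hP : 0 < Pmax) (hσ : 0 < σ2) (hξ : 0 < ξ)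
    (hS : 0 < PSIC) (h12 : h2 < h1)
    (α β tmin : ℝ)
    (hα : α = Real.logb 2 (1 + h2 * Pmax / σ2))
    (hβ : β = h2 / h1)
    (htmin : tmin = PSIC / (ξ * h1 * Pmax + PSIC))
    (hr0 : 0 ≤ r)
    (hr1 : r ≤ (1 - tmin) * Real.logb 2 (1 + h1 * Pmax / σ2))
    (R₂ : ℝ)
    (hR : R₂ = α - (1 - tmin) * Real.logb 2 (β * (2:ℝ) ^ (r / (1 - tmin)) + 1 - β)) :
    tmin * α ≤ R₂ ∧ R₂ ≤ α :=
  stmt_13_general h1 h2 Pmax σ2 ξ PSIC r hh1 hh2 hP hσ hξ hS α β tmin hα hβ htmin hr0 hr1 R₂ hR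
end

section
/- Assume ξ|h₁|²P_max > P_SIC and |h₂|² > |h₁|² − P_SIC/(ξP_max), all constants positive, r ≥ 0 within the feasible range. Then the optimal value of the power-splitting problem is R₂* = log₂(1 + (ξ|h₁|²P_max − P_SIC)/(ξσ²)) − r, i.e., R₂* + r is constant; in particular the boundary of the rate region is a straight line of slope −1. -/
/-!
With `ρ₀ := P_SIC / (ξ |h₁|² P_max)` and effective gain `g := |h₁|²(1 - ρ)`, the second rate is
`log₂ (1 + g P_max / σ²) - log₂ (1 + g P₁ / σ²) = log₂ (1 + g P_max / σ²) - r`, which is largest at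
the smallest splitting ratio `ρ = ρ₀`; there it equals `log₂ (1 + (ξ|h₁|²P_max - P_SIC)/(ξσ²)) - r`.
This value is attained by `ρ₀` and `P₁ = σ² (2^r - 1) / g`, because the condition on `|h₂|²` says
exactly that `|h₂|² ≥ |h₁|²(1 - ρ₀)`, and a larger gain only increases the first rate.
-/

open Real Set

lemma logb_mul_add_div_mul_add_eq_sub {g P Q σ : ℝ} (hσ : 0 < σ) (hP : 0 ≤ g * P)
    (hQ : 0 ≤ g * Q) :
    logb 2 ((g * P + σ) / (g * Q + σ)) = logb 2 (1 + g * P / σ) - logb 2 (1 + g * Q / σ) := by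
  have hsnr : (g * P + σ) / (g * Q + σ) = (1 + g * P / σ) / (1 + g * Q / σ) := by
    field_simp
    ring
  rw [hsnr, logb_div (by positivity) (by positivity)]

lemma mul_add_div_mul_add_le_of_le {g g' P Q σ : ℝ} (hσ : 0 < σ) (hQ : 0 ≤ Q) (hQP : Q ≤ P)
    (hg : 0 ≤ g) (hgg' : g ≤ g') :
    (g * P + σ) / (g * Q + σ) ≤ (g' * P + σ) / (g' * Q + σ) := by
  have hgQ : 0 ≤ g * Q := mul_nonneg hg hQ
  have hg'Q : 0 ≤ g' * Q := mul_nonneg (hg.trans hgg') hQ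
  rw [div_le_div_iff₀ (by positivity) (by positivity)]
  nlinarith [mul_nonneg (mul_nonneg hσ.le (sub_nonneg.2 hgg')) (sub_nonneg.2 hQP)]

lemma logb_mul_add_div_mul_add_le {b g P Q σ r : ℝ} (hσ : 0 < σ) (hb : 0 ≤ b) (hbg : b ≤ g)
    (hP : 0 ≤ P) (hQ : 0 ≤ Q) (hrate : logb 2 (1 + b * Q / σ) = r) :
    logb 2 ((b * P + σ) / (b * Q + σ)) ≤ logb 2 (1 + g * P / σ) - r := by
  rw [logb_mul_add_div_mul_add_eq_sub hσ (by positivity) (by positivity), hrate]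
  gcongr
  norm_num

lemma logb_one_add_mul_div_eq {g σ : ℝ} (hg : 0 < g) (hσ : 0 < σ) (r : ℝ) :
    logb 2 (1 + g * (σ * (2 ^ r - 1) / g) / σ) = r := by
  have hsnr : g * (σ * (2 ^ r - 1) / g) / σ = 2 ^ r - 1 := by
    field_simp
  rw [hsnr, add_sub_cancel, logb_rpow two_pos (by norm_num)]

lemma div_le_of_le_logb {g σ P r : ℝ} (hg : 0 < g) (hσ : 0 < σ) (hP : 0 ≤ P)
    (hr : r ≤ logb 2 (1 + g * P / σ)) :
    σ * (2 ^ r - 1) / g ≤ P := by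
  rw [le_logb_iff_rpow_le one_lt_two (by positivity)] at hr
  rw [div_le_iff₀ hg]
  have : σ * (2 ^ r - 1) ≤ σ * (g * P / σ) := by gcongr; linarith
  rwa [mul_div_cancel₀ _ hσ.ne', mul_comm g] at this

theorem stmt_15_general (h1 h2 Pmax σ2 ξ PSIC r : ℝ)
    (hh1 : 0 < h1) (hP : 0 < Pmax) (hσ : 0 < σ2) (hξ : 0 < ξ)
    (hfeas : PSIC < ξ * h1 * Pmax)
    (hch : h1 - PSIC / (ξ * Pmax) < h2)
    (hr0 : 0 ≤ r)
    (hr1 : r ≤ Real.logb 2 (1 + (ξ * h1 * Pmax - PSIC) / (ξ * σ2))) :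
    IsGreatest
      {v : ℝ | ∃ ρ P₁ : ℝ,
        PSIC / (ξ * h1 * Pmax) ≤ ρ ∧ ρ < 1 ∧ 0 ≤ P₁ ∧ P₁ ≤ Pmax ∧
        Real.logb 2 (1 + h1 * (1 - ρ) * P₁ / σ2) = r ∧
        v = min (Real.logb 2 ((h2 * Pmax + σ2) / (h2 * P₁ + σ2)))
                (Real.logb 2 ((h1 * (1 - ρ) * Pmax + σ2) / (h1 * (1 - ρ) * P₁ + σ2)))}
      (Real.logb 2 (1 + (ξ * h1 * Pmax - PSIC) / (ξ * σ2)) - r) := by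
  set ρ₀ := PSIC / (ξ * h1 * Pmax)
  set g := h1 * (1 - ρ₀)
  have hρ₀ : ρ₀ < 1 := (div_lt_one (by positivity)).2 hfeas
  have hg : 0 < g := mul_pos hh1 (sub_pos.2 hρ₀)
  have hg_eq : g = h1 - PSIC / (ξ * Pmax) := by
    simp only [g, ρ₀]
    field_simp
  have hsnr : (ξ * h1 * Pmax - PSIC) / (ξ * σ2) = g * Pmax / σ2 := by
    rw [hg_eq]
    field_simp
  rw [hsnr] at hr1 ⊢
  set P₁ := σ2 * (2 ^ r - 1) / g
  have hP₁ : 0 ≤ P₁ := div_nonneg (mul_nonneg hσ.le (sub_nonneg.2 (one_le_rpow one_le_two hr0)))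
    hg.le
  have hP₁max : P₁ ≤ Pmax := div_le_of_le_logb hg hσ hP.le hr1
  have hrate : logb 2 (1 + g * P₁ / σ2) = r := logb_one_add_mul_div_eq hg hσ r
  refine ⟨⟨ρ₀, P₁, le_rfl, hρ₀, hP₁, hP₁max, hrate, ?_⟩, ?_⟩
  · have hsecond : logb 2 ((g * Pmax + σ2) / (g * P₁ + σ2)) = logb 2 (1 + g * Pmax / σ2) - r := by
      rw [logb_mul_add_div_mul_add_eq_sub hσ (by positivity) (by positivity), hrate]
    have hfirst : logb 2 ((g * Pmax + σ2) / (g * P₁ + σ2))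
        ≤ logb 2 ((h2 * Pmax + σ2) / (h2 * P₁ + σ2)) :=
      logb_le_logb_of_le one_lt_two (by positivity)
        (mul_add_div_mul_add_le_of_le hσ hP₁ hP₁max hg.le (hg_eq ▸ hch.le))
    rw [min_eq_right hfirst, hsecond]
  · rintro v ⟨ρ, Q, hρ₀ρ, hρ1, hQ, -, hQrate, rfl⟩
    exact (min_le_right _ _).trans <| logb_mul_add_div_mul_add_le hσ
      (mul_nonneg hh1.le (sub_nonneg.2 hρ1.le)) (mul_le_mul_of_nonneg_left (by linarith) hh1.le)
      hP.le hQ hQrate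

theorem stmt_15 (h1 h2 Pmax σ2 ξ PSIC r : ℝ)
    (hh1 : 0 < h1) (hh2 : 0 < h2) (hP : 0 < Pmax) (hσ : 0 < σ2) (hξ : 0 < ξ)
    (hS : 0 < PSIC)
    (hfeas : PSIC < ξ * h1 * Pmax)
    (hch : h1 - PSIC / (ξ * Pmax) < h2)
    (hr0 : 0 ≤ r)
    (hr1 : r ≤ Real.logb 2 (1 + (ξ * h1 * Pmax - PSIC) / (ξ * σ2))) :
    IsGreatest
      {v : ℝ | ∃ ρ P₁ : ℝ,
        PSIC / (ξ * h1 * Pmax) ≤ ρ ∧ ρ < 1 ∧ 0 ≤ P₁ ∧ P₁ ≤ Pmax ∧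
        Real.logb 2 (1 + h1 * (1 - ρ) * P₁ / σ2) = r ∧
        v = min (Real.logb 2 ((h2 * Pmax + σ2) / (h2 * P₁ + σ2)))
                (Real.logb 2 ((h1 * (1 - ρ) * Pmax + σ2) / (h1 * (1 - ρ) * P₁ + σ2)))}
      (Real.logb 2 (1 + (ξ * h1 * Pmax - PSIC) / (ξ * σ2)) - r) :=
  stmt_15_general h1 h2 Pmax σ2 ξ PSIC r hh1 hP hσ hξ hfeas hch hr0 hr1
end

section
/- Assume ξ|h₁|²P_max > P_SIC and |h₂|² ≤ |h₁|² − P_SIC/(ξP_max). Then the optimal value of the power-splitting problem equals log₂(((|h₂|²P_max + σ²)·(ξ|h₁|²P_max − P_SIC)) / ((ξP_max·(|h₂|²(2^r − 1) + |h₁|²) − P_SIC)·σ²)), attained at ρ = P_SIC/(ξ|h₁|²P_max) and P₁ = ξP_max(2^r − 1)σ²/(ξ|h₁|²P_max − P_SIC). -/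
/-!
Write `g = |h₁|²(1 - ρ)` for the effective gain of the second link. The rate constraint pins the
product `g P₁` to `(2^r - 1)σ²`, so `P₁` is smallest when `g` is largest, i.e. at the smallest
admissible split `ρ₀`. The first rate loss is decreasing in `P₁`, so it is maximised there, and at
that point it is also the smaller of the two terms because the second loss grows with the gain and
`|h₂|² ≤ g₀`.
-/

open Real Set

/-- The rate `log₂ (1 + g M/σ) - log₂ (1 + g P/σ)` given up on a link of gain `g` when only `P` of
the power `M` is spent on it. -/
noncomputable def rateLoss (g M P σ : ℝ) : ℝ :=
  logb 2 ((g * M + σ) / (g * P + σ))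

section RateLoss

variable {g M P Q σ : ℝ}

lemma rateLoss_anti_power (hg : 0 ≤ g) (hM : 0 ≤ M) (hσ : 0 < σ) (hP : 0 ≤ P) (hPQ : P ≤ Q) :
    rateLoss g M Q σ ≤ rateLoss g M P σ :=
  have hQ : 0 ≤ Q := hP.trans hPQ
  logb_le_logb_of_le one_lt_two (by positivity) <|
    div_le_div_of_nonneg_left (by positivity) (by positivity) (by nlinarith)

lemma rateLoss_mono_gain {g' : ℝ} (hg : 0 ≤ g) (hgg' : g ≤ g') (hσ : 0 < σ) (hP : 0 ≤ P)
    (hPM : P ≤ M) : rateLoss g M P σ ≤ rateLoss g' M P σ := by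
  have hg' : 0 ≤ g' := hg.trans hgg'
  have hM : 0 ≤ M := hP.trans hPM
  refine logb_le_logb_of_le one_lt_two (by positivity) ?_
  rw [div_le_div_iff₀ (by positivity) (by positivity)]
  nlinarith [mul_nonneg hσ.le (mul_nonneg (sub_nonneg.2 hgg') (sub_nonneg.2 hPM))]

lemma min_rateLoss_eq_left {g' : ℝ} (hg : 0 ≤ g) (hgg' : g ≤ g') (hσ : 0 < σ) (hP : 0 ≤ P)
    (hPM : P ≤ M) : min (rateLoss g M P σ) (rateLoss g' M P σ) = rateLoss g M P σ :=
  min_eq_left (rateLoss_mono_gain hg hgg' hσ hP hPM)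

/-- With `g P` fixed, a gain below `g₀` forces more power than `P₀`. -/
lemma rateLoss_le_of_mul_eq {h g₀ P₀ : ℝ} (hh : 0 ≤ h) (hM : 0 ≤ M) (hσ : 0 < σ) (hg : 0 < g)
    (hgg₀ : g ≤ g₀) (hP₀ : 0 ≤ P₀) (hgP : g * P = g₀ * P₀) :
    rateLoss h M P σ ≤ rateLoss h M P₀ σ := by
  refine rateLoss_anti_power hh hM hσ hP₀ ?_
  by_contra! hlt
  nlinarith [mul_le_mul_of_nonneg_right hgg₀ hP₀]

end RateLoss

section Rate

variable {x σ r : ℝ}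

lemma logb_one_add_div_eq_iff (hσ : 0 < σ) (hx : 0 ≤ x) :
    logb 2 (1 + x / σ) = r ↔ x = (2 ^ r - 1) * σ := by
  constructor
  · rintro rfl
    rw [rpow_logb (by norm_num) (by norm_num) (by positivity)]
    field_simp
    ring
  · rintro rfl
    rw [mul_div_cancel_right₀ _ hσ.ne', add_sub_cancel, logb_rpow (by norm_num) (by norm_num)]

lemma le_of_mul_eq_of_le_logb {g P M : ℝ} (hσ : 0 < σ) (hg : 0 < g) (hM : 0 ≤ M)
    (hgP : g * P = (2 ^ r - 1) * σ) (hr : r ≤ logb 2 (1 + g * M / σ)) : P ≤ M := by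
  have h2r : (2 : ℝ) ^ r ≤ 1 + g * M / σ :=
    calc (2 : ℝ) ^ r ≤ 2 ^ logb 2 (1 + g * M / σ) := rpow_le_rpow_of_exponent_le one_le_two hr
      _ = 1 + g * M / σ := rpow_logb (by norm_num) (by norm_num) (by positivity)
  have hgPM : g * P ≤ g * M := by
    rw [hgP, ← le_div_iff₀ hσ]
    linarith
  exact le_of_mul_le_mul_left hgPM hg

end Rate

lemma isGreatest_min_rateLoss {h₁ h₂ M σ r ρ₀ P₀ : ℝ} (hh₁ : 0 < h₁) (hh₂ : 0 ≤ h₂) (hM : 0 ≤ M)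
    (hσ : 0 < σ) (hρ₀ : ρ₀ < 1) (hh₂g₀ : h₂ ≤ h₁ * (1 - ρ₀)) (hP₀ : 0 ≤ P₀) (hP₀M : P₀ ≤ M)
    (hrate : h₁ * (1 - ρ₀) * P₀ = (2 ^ r - 1) * σ) :
    IsGreatest {w | ∃ ρ P₁ : ℝ, ρ₀ ≤ ρ ∧ ρ < 1 ∧ 0 ≤ P₁ ∧ P₁ ≤ M ∧
        logb 2 (1 + h₁ * (1 - ρ) * P₁ / σ) = r ∧
        w = min (rateLoss h₂ M P₁ σ) (rateLoss (h₁ * (1 - ρ)) M P₁ σ)}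
      (rateLoss h₂ M P₀ σ) := by
  refine ⟨⟨ρ₀, P₀, le_rfl, hρ₀, hP₀, hP₀M, ?_, (min_rateLoss_eq_left hh₂ hh₂g₀ hσ hP₀ hP₀M).symm⟩,
    ?_⟩
  · exact (logb_one_add_div_eq_iff hσ (by positivity)).2 hrate
  rintro w ⟨ρ, P₁, hρ, hρ1, hP₁, -, hrateρ, rfl⟩
  have hg : 0 < h₁ * (1 - ρ) := mul_pos hh₁ (by linarith)
  have hgg₀ : h₁ * (1 - ρ) ≤ h₁ * (1 - ρ₀) := by nlinarith
  have hgP := (logb_one_add_div_eq_iff hσ (by positivity)).1 hrateρ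
  exact (min_le_left _ _).trans <|
    rateLoss_le_of_mul_eq hh₂ hM hσ hg hgg₀ hP₀ (hgP.trans hrate.symm)

theorem stmt_16_general (h1 h2 Pmax σ2 ξ PSIC r : ℝ)
    (hh1 : 0 < h1) (hh2 : 0 < h2) (hP : 0 < Pmax) (hσ : 0 < σ2) (hξ : 0 < ξ)
    (hfeas : PSIC < ξ * h1 * Pmax)
    (hch : h2 ≤ h1 - PSIC / (ξ * Pmax))
    (hr0 : 0 ≤ r)
    (hr1 : r ≤ Real.logb 2 (1 + (ξ * h1 * Pmax - PSIC) / (ξ * σ2)))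
    (obj : ℝ → ℝ → ℝ)
    (hobj : ∀ ρ P₁ : ℝ, obj ρ P₁ =
      min (Real.logb 2 ((h2 * Pmax + σ2) / (h2 * P₁ + σ2)))
          (Real.logb 2 ((h1 * (1 - ρ) * Pmax + σ2) / (h1 * (1 - ρ) * P₁ + σ2))))
    (ρ₀ P₁₀ v : ℝ)
    (hρ₀ : ρ₀ = PSIC / (ξ * h1 * Pmax))
    (hP₁₀ : P₁₀ = ξ * Pmax * ((2:ℝ) ^ r - 1) * σ2 / (ξ * h1 * Pmax - PSIC))
    (hv : v = Real.logb 2 ((h2 * Pmax + σ2) * (ξ * h1 * Pmax - PSIC) /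
        ((ξ * Pmax * (h2 * ((2:ℝ) ^ r - 1) + h1) - PSIC) * σ2))) :
    IsGreatest
      {w : ℝ | ∃ ρ P₁ : ℝ,
        PSIC / (ξ * h1 * Pmax) ≤ ρ ∧ ρ < 1 ∧ 0 ≤ P₁ ∧ P₁ ≤ Pmax ∧
        Real.logb 2 (1 + h1 * (1 - ρ) * P₁ / σ2) = r ∧ w = obj ρ P₁} v ∧
    Real.logb 2 (1 + h1 * (1 - ρ₀) * P₁₀ / σ2) = r ∧
    obj ρ₀ P₁₀ = v := by
  obtain rfl : obj = fun ρ P₁ ↦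
      min (rateLoss h2 Pmax P₁ σ2) (rateLoss (h1 * (1 - ρ)) Pmax P₁ σ2) := funext₂ hobj
  have hA : 0 < ξ * h1 * Pmax - PSIC := by linarith
  have hg₀ : h1 * (1 - ρ₀) = (ξ * h1 * Pmax - PSIC) / (ξ * Pmax) := by
    rw [hρ₀]; field_simp
  have hρ₀1 : ρ₀ < 1 := by rw [hρ₀, div_lt_one (by positivity)]; linarith
  have hh2g₀ : h2 ≤ h1 * (1 - ρ₀) := by
    rw [hg₀]; convert hch using 1; field_simp
  have hrate : h1 * (1 - ρ₀) * P₁₀ = (2 ^ r - 1) * σ2 := by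
    rw [hg₀, hP₁₀]; field_simp
  have hP₁₀0 : 0 ≤ P₁₀ := by
    have := sub_nonneg.2 (one_le_rpow one_le_two hr0)
    rw [hP₁₀]; positivity
  have hP₁₀le : P₁₀ ≤ Pmax := by
    refine le_of_mul_eq_of_le_logb hσ (by rw [hg₀]; positivity) hP.le hrate ?_
    convert hr1 using 3
    rw [hg₀]; field_simp
  have hv' : v = rateLoss h2 Pmax P₁₀ σ2 := by
    have hden : h2 * P₁₀ + σ2 =
        (ξ * Pmax * (h2 * (2 ^ r - 1) + h1) - PSIC) * σ2 / (ξ * h1 * Pmax - PSIC) := by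
      rw [hP₁₀, eq_div_iff hA.ne', add_mul, mul_assoc, div_mul_cancel₀ _ hA.ne']; ring
    rw [hv, rateLoss, hden, div_div_eq_mul_div]
  rw [← hρ₀, hv']
  exact ⟨isGreatest_min_rateLoss hh1 hh2.le hP.le hσ hρ₀1 hh2g₀ hP₁₀0 hP₁₀le hrate,
    (logb_one_add_div_eq_iff hσ (by positivity)).2 hrate,
    min_rateLoss_eq_left hh2.le hh2g₀ hσ hP₁₀0 hP₁₀le⟩

theorem stmt_16 (h1 h2 Pmax σ2 ξ PSIC r : ℝ)
    (hh1 : 0 < h1) (hh2 : 0 < h2) (hP : 0 < Pmax) (hσ : 0 < σ2) (hξ : 0 < ξ)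
    (hS : 0 < PSIC)
    (hfeas : PSIC < ξ * h1 * Pmax)
    (hch : h2 ≤ h1 - PSIC / (ξ * Pmax))
    (hr0 : 0 ≤ r)
    (hr1 : r ≤ Real.logb 2 (1 + (ξ * h1 * Pmax - PSIC) / (ξ * σ2)))
    (obj : ℝ → ℝ → ℝ)
    (hobj : ∀ ρ P₁ : ℝ, obj ρ P₁ =
      min (Real.logb 2 ((h2 * Pmax + σ2) / (h2 * P₁ + σ2)))
          (Real.logb 2 ((h1 * (1 - ρ) * Pmax + σ2) / (h1 * (1 - ρ) * P₁ + σ2))))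
    (ρ₀ P₁₀ v : ℝ)
    (hρ₀ : ρ₀ = PSIC / (ξ * h1 * Pmax))
    (hP₁₀ : P₁₀ = ξ * Pmax * ((2:ℝ) ^ r - 1) * σ2 / (ξ * h1 * Pmax - PSIC))
    (hv : v = Real.logb 2 ((h2 * Pmax + σ2) * (ξ * h1 * Pmax - PSIC) /
        ((ξ * Pmax * (h2 * ((2:ℝ) ^ r - 1) + h1) - PSIC) * σ2))) :
    IsGreatest
      {w : ℝ | ∃ ρ P₁ : ℝ,
        PSIC / (ξ * h1 * Pmax) ≤ ρ ∧ ρ < 1 ∧ 0 ≤ P₁ ∧ P₁ ≤ Pmax ∧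
        Real.logb 2 (1 + h1 * (1 - ρ) * P₁ / σ2) = r ∧ w = obj ρ P₁} v ∧
    Real.logb 2 (1 + h1 * (1 - ρ₀) * P₁₀ / σ2) = r ∧
    obj ρ₀ P₁₀ = v :=
  stmt_16_general h1 h2 Pmax σ2 ξ PSIC r hh1 hh2 hP hσ hξ hfeas hch hr0 hr1 obj hobj ρ₀ P₁₀ v hρ₀
    hP₁₀ hv
end
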